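/- (Round invariant of the multiple-matrix multiplication scheme.) Let F be a field, let N, T be positive integers with 2T < N and N·1_F ≠ 0 in F, set K = N − 2T, and let α ∈ F be a primitive N-th root of unity. Let M ∈ F^{m×n} be partitioned column-wise into K equal blocks M_1, …, M_K and let A ∈ F^{n×p} be partitioned row-wise into K equal blocks A_1, …, A_K (assuming K divides n), with key matrices R_1, …, R_T ∈ F^{m×(n/K)} and S_1, …, S_T ∈ F^{(n/K)×p}. Let [[M]]_i = ∑_{l=1}^{K} M_l α^{(i−1)(l−1)} + ∑_{l=1}^{T} R_l α^{(i−1)(K+l−1)} and [[A]]_i = ∑_{l=1}^{K} A_l α^{−(i−1)(l−1)} + ∑_{l=1}^{T} S_l α^{−(i−1)(K+T+l−1)}, and let H_i = [[M]]_i · [[A]]_i. Suppose K divides p, partition each m×p matrix column-wise into K equal blocks, and let each server i hold arbitrary key matrices R'^{(i)}_1, …, R'^{(i)}_T ∈ F^{m×(p/K)}. Define V_{i,j} = ∑_{l=1}^{K} H_i^{(l)} α^{(j−1)(l−1)} + ∑_{l=1}^{T} R'^{(i)}_l α^{(j−1)(K+l−1)}. Then for every j, (1/N) ∑_{i=1}^{N}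 V_{i,j} = ∑_{l=1}^{K} (MA)^{(l)} α^{(j−1)(l−1)} + ∑_{l=1}^{T} R̄_l α^{(j−1)(K+l−1)} with R̄_l = (1/N) ∑_{i=1}^{N} R'^{(i)}_l; that is, after one computation-and-communication round, server j holds a valid (N, K, T) left-share of the product MA. -/
import Mathlib


/-- The `l`-th block of the column-wise partition of an `m × (K·b)` matrix into `K`
equal blocks of size `m × b`. -/
def colBlock {F : Type*} {m b : ℕ} (K : ℕ) (M : Matrix (Fin m) (Fin (K * b)) F)
    (l : Fin K) : Matrix (Fin m) (Fin b) F :=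
  Matrix.of fun r c => M r ⟨l.1 * b + c.1, by
    calc l.1 * b + c.1 < l.1 * b + b := Nat.add_lt_add_left c.isLt _
      _ = (l.1 + 1) * b := by ring
      _ ≤ K * b := Nat.mul_le_mul_right _ l.isLt⟩

/-- The `l`-th block of the row-wise partition of a `(K·b) × n` matrix into `K`
equal blocks of size `b × n`. -/
def rowBlock {F : Type*} {b n : ℕ} (K : ℕ) (M : Matrix (Fin (K * b)) (Fin n) F)
    (l : Fin K) : Matrix (Fin b) (Fin n) F :=
  Matrix.of fun r c => M ⟨l.1 * b + r.1, by
    calc l.1 * b + r.1 < l.1 * b + b := Nat.add_lt_add_left r.isLt _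
      _ = (l.1 + 1) * b := by ring
      _ ≤ K * b := Nat.mul_le_mul_right _ l.isLt⟩ c

section Helpers
variable {F : Type*} [Field F]

lemma colBlock_sum {m b : ℕ} (K : ℕ) {ι : Type*} (s : Finset ι)
    (f : ι → Matrix (Fin m) (Fin (K * b)) F) (l : Fin K) :
    colBlock K (∑ i ∈ s, f i) l = ∑ i ∈ s, colBlock K (f i) l := by
  ext r c; simp [colBlock, Matrix.sum_apply]

lemma colBlock_smul {m b : ℕ} (K : ℕ) (a : F) (X : Matrix (Fin m) (Fin (K * b)) F) (l : Fin K) :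
    colBlock K (a • X) l = a • colBlock K X l := by
  ext r c; simp [colBlock]

lemma blockMul {m n : ℕ} (K b : ℕ) (M : Matrix (Fin m) (Fin (K * b)) F)
    (A : Matrix (Fin (K * b)) (Fin n) F) :
    ∑ l : Fin K, colBlock K M l * rowBlock K A l = M * A := by
  ext r c
  rw [Matrix.sum_apply, Matrix.mul_apply,
    ← Equiv.sum_comp (finProdFinEquiv : Fin K × Fin b ≃ Fin (K * b))
      (fun k => M r k * A k c), Fintype.sum_prod_type]
  refine Finset.sum_congr rfl fun l _ => ?_
  rw [Matrix.mul_apply]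
  refine Finset.sum_congr rfl fun k _ => ?_
  have he : (finProdFinEquiv (l, k) : Fin (K * b))
      = ⟨l.1 * b + k.1, by
        calc l.1 * b + k.1 < l.1 * b + b := Nat.add_lt_add_left k.isLt _
          _ = (l.1 + 1) * b := by ring
          _ ≤ K * b := Nat.mul_le_mul_right _ l.isLt⟩ := by
    apply Fin.ext
    show k.1 + b * l.1 = l.1 * b + k.1
    ring
  simp [he, colBlock, rowBlock]

lemma sumPow {N : ℕ} (hN : 0 < N) {α : F} (hα : IsPrimitiveRoot α N) (d : ℤ) :
    ∑ i ∈ Finset.range N, α ^ ((i : ℤ) * d) = if (N : ℤ) ∣ d then (N : F) else 0 := by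
  split_ifs with h
  · have h1 : α ^ d = 1 := (hα.zpow_eq_one_iff_dvd d).mpr h
    have : ∀ i ∈ Finset.range N, α ^ ((i : ℤ) * d) = 1 := fun i _ => by
      rw [mul_comm, zpow_mul, h1, one_zpow]
    rw [Finset.sum_congr rfl this]
    simp
  · have hne : α ^ d ≠ 1 := fun hh => h ((hα.zpow_eq_one_iff_dvd d).mp hh)
    have hNpow : (α ^ d) ^ N = 1 := by
      rw [← zpow_natCast (α ^ d) N, ← zpow_mul, mul_comm, zpow_mul, zpow_natCast,
        hα.pow_eq_one, one_zpow]
    calc ∑ i ∈ Finset.range N, α ^ ((i : ℤ) * d)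
        = ∑ i ∈ Finset.range N, (α ^ d) ^ i := by
          refine Finset.sum_congr rfl fun i _ => ?_
          rw [← zpow_natCast (α ^ d) i, ← zpow_mul, mul_comm]
      _ = 0 := by rw [geom_sum_eq hne, hNpow, sub_self, zero_div]

lemma not_dvd_small {N : ℕ} (d : ℤ) (h1 : d ≠ 0) (h2 : |d| < N) : ¬ (N : ℤ) ∣ d := by
  intro h
  have := Int.le_of_dvd (abs_pos.mpr h1) ((dvd_abs _ _).mpr h)
  omega

lemma piece {N : ℕ} (hN : 0 < N) {α : F} (hα : IsPrimitiveRoot α N)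
    {ι κ : Type*} [Fintype ι] [Fintype κ] {m p : ℕ}
    (d : ι → κ → ℤ) (X : ι → κ → Matrix (Fin m) (Fin p) F) :
    ∑ i ∈ Finset.range N, ∑ l : ι, ∑ l' : κ, α ^ ((i : ℤ) * d l l') • X l l'
      = ∑ l : ι, ∑ l' : κ, (if (N : ℤ) ∣ d l l' then (N : F) else 0) • X l l' := by
  rw [Finset.sum_comm]
  refine Finset.sum_congr rfl fun l _ => ?_
  rw [Finset.sum_comm]
  refine Finset.sum_congr rfl fun l' _ => ?_
  rw [← Finset.sum_smul, sumPow hN hα]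

end Helpers

set_option maxHeartbeats 1000000 in
/-- Round invariant of the multiple-matrix multiplication scheme: if server `i`
holds the product `H_i` of an `(N, K, T)` left-share of `M` (column partitions
`M_l`, keys `R_l`) and an `(N, K, T)` right-share of `A` (row partitions `A_l`,
keys `S_l`), `K = N - 2T`, and re-shares `H_i` with its own keys `R'^{(i)}`, then
averaging gives each server `j` a valid `(N, K, T)` left-share of the product `M·A`
with keys `R̄_l = (1/N) ∑_i R'^{(i)}_l`. Servers and blocks are 0-indexed here; the
inner dimension is `n = K·b` and the column dimension is `p = K·c`. -/
theorem multiple_matrix_round_invariant {F : Type*} [Field F] {m b c : ℕ}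
    (N T : ℕ) (hT : 0 < T) (h2T : 2 * T < N) (hNF : (N : F) ≠ 0)
    (α : F) (hα : IsPrimitiveRoot α N) (K : ℕ) (hK : K = N - 2 * T)
    (M : Matrix (Fin m) (Fin (K * b)) F) (A : Matrix (Fin (K * b)) (Fin (K * c)) F)
    (R : Fin T → Matrix (Fin m) (Fin b) F)
    (S : Fin T → Matrix (Fin b) (Fin (K * c)) F)
    (R' : ℕ → Fin T → Matrix (Fin m) (Fin c) F)
    (H : ℕ → Matrix (Fin m) (Fin (K * c)) F)
    (hH : ∀ i, H i =
        (∑ l : Fin K, α ^ (i * l.1) • colBlock K M l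
            + ∑ l : Fin T, α ^ (i * (K + l.1)) • R l) *
        (∑ l : Fin K, α ^ (-(i : ℤ) * (l.1 : ℤ)) • rowBlock K A l
            + ∑ l : Fin T, α ^ (-(i : ℤ) * ((K + T + l.1 : ℕ) : ℤ)) • S l))
    (V : ℕ → ℕ → Matrix (Fin m) (Fin c) F)
    (hV : ∀ i j, V i j = ∑ l : Fin K, α ^ (j * l.1) • colBlock K (H i) l
        + ∑ l : Fin T, α ^ (j * (K + l.1)) • R' i l) :
    ∀ j, (N : F)⁻¹ • ∑ i ∈ Finset.range N, V i j
        = ∑ l : Fin K, α ^ (j * l.1) • colBlock K (M * A) l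
          + ∑ l : Fin T, α ^ (j * (K + l.1)) •
              ((N : F)⁻¹ • ∑ i ∈ Finset.range N, R' i l) := by
  have hN : 0 < N := by omega
  have hα0 : α ≠ 0 := hα.ne_zero (by omega)
  have hcs : ∀ (i e : ℕ) (e' : ℤ),
      α ^ (i * e) * α ^ (-(i : ℤ) * e') = α ^ ((i : ℤ) * ((e : ℤ) - e')) := by
    intro i e e'
    rw [← zpow_natCast α (i * e), ← zpow_add₀ hα0]
    congr 1
    push_cast
    ring
  have hprod : ∀ i, H i =
      (∑ l : Fin K, ∑ l' : Fin K,
          α ^ ((i : ℤ) * (((l.1 : ℕ) : ℤ) - ((l'.1 : ℤ)))) • (colBlock K M l * rowBlock K A l'))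
      + (∑ l : Fin K, ∑ l' : Fin T,
          α ^ ((i : ℤ) * (((l.1 : ℕ) : ℤ) - ((K + T + l'.1 : ℕ) : ℤ))) • (colBlock K M l * S l'))
      + (∑ l : Fin T, ∑ l' : Fin K,
          α ^ ((i : ℤ) * (((K + l.1 : ℕ) : ℤ) - ((l'.1 : ℤ)))) • (R l * rowBlock K A l'))
      + (∑ l : Fin T, ∑ l' : Fin T,
          α ^ ((i : ℤ) * (((K + l.1 : ℕ) : ℤ) - ((K + T + l'.1 : ℕ) : ℤ))) • (R l * S l')) := by
    intro i
    have q1 : (∑ l : Fin K, α ^ (i * l.1) • colBlock K M l)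
        * (∑ l' : Fin K, α ^ (-(i : ℤ) * (l'.1 : ℤ)) • rowBlock K A l')
        = ∑ l : Fin K, ∑ l' : Fin K,
          α ^ ((i : ℤ) * (((l.1 : ℕ) : ℤ) - ((l'.1 : ℤ)))) • (colBlock K M l * rowBlock K A l') := by
      rw [Matrix.sum_mul]
      refine Finset.sum_congr rfl fun l _ => ?_
      rw [Matrix.smul_mul, Matrix.mul_sum, Finset.smul_sum]
      refine Finset.sum_congr rfl fun l' _ => ?_
      rw [Matrix.mul_smul, smul_smul, hcs]
    have q2 : (∑ l : Fin K, α ^ (i * l.1) • colBlock K M l)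
        * (∑ l' : Fin T, α ^ (-(i : ℤ) * ((K + T + l'.1 : ℕ) : ℤ)) • S l')
        = ∑ l : Fin K, ∑ l' : Fin T,
          α ^ ((i : ℤ) * (((l.1 : ℕ) : ℤ) - ((K + T + l'.1 : ℕ) : ℤ))) • (colBlock K M l * S l') := by
      rw [Matrix.sum_mul]
      refine Finset.sum_congr rfl fun l _ => ?_
      rw [Matrix.smul_mul, Matrix.mul_sum, Finset.smul_sum]
      refine Finset.sum_congr rfl fun l' _ => ?_
      rw [Matrix.mul_smul, smul_smul, hcs]
    have q3 : (∑ l : Fin T, α ^ (i * (K + l.1)) • R l)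
        * (∑ l' : Fin K, α ^ (-(i : ℤ) * (l'.1 : ℤ)) • rowBlock K A l')
        = ∑ l : Fin T, ∑ l' : Fin K,
          α ^ ((i : ℤ) * (((K + l.1 : ℕ) : ℤ) - ((l'.1 : ℤ)))) • (R l * rowBlock K A l') := by
      rw [Matrix.sum_mul]
      refine Finset.sum_congr rfl fun l _ => ?_
      rw [Matrix.smul_mul, Matrix.mul_sum, Finset.smul_sum]
      refine Finset.sum_congr rfl fun l' _ => ?_
      rw [Matrix.mul_smul, smul_smul, hcs]
    have q4 : (∑ l : Fin T, α ^ (i * (K + l.1)) • R l)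
        * (∑ l' : Fin T, α ^ (-(i : ℤ) * ((K + T + l'.1 : ℕ) : ℤ)) • S l')
        = ∑ l : Fin T, ∑ l' : Fin T,
          α ^ ((i : ℤ) * (((K + l.1 : ℕ) : ℤ) - ((K + T + l'.1 : ℕ) : ℤ))) • (R l * S l') := by
      rw [Matrix.sum_mul]
      refine Finset.sum_congr rfl fun l _ => ?_
      rw [Matrix.smul_mul, Matrix.mul_sum, Finset.smul_sum]
      refine Finset.sum_congr rfl fun l' _ => ?_
      rw [Matrix.mul_smul, smul_smul, hcs]
    rw [hH i, Matrix.add_mul, Matrix.mul_add, Matrix.mul_add, q1, q2, q3, q4]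
    exact (add_assoc _ _ _).symm
  have hsum : ∑ i ∈ Finset.range N, H i = (N : F) • (M * A) := by
    simp only [hprod, Finset.sum_add_distrib]
    rw [piece hN hα, piece hN hα, piece hN hα, piece hN hα]
    have hKN : K < N := by omega
    have e2 : (∑ l : Fin K, ∑ l' : Fin T,
        (if (N : ℤ) ∣ (((l.1 : ℕ) : ℤ) - ((K + T + l'.1 : ℕ) : ℤ)) then (N : F) else 0)
          • (colBlock K M l * S l')) = 0 := by
      refine Finset.sum_eq_zero fun l _ => Finset.sum_eq_zero fun l' _ => ?_
      rw [if_neg, zero_smul]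
      refine not_dvd_small _ (by have := l.isLt; have := l'.isLt; push_cast; omega) ?_
      rw [abs_lt]
      have := l.isLt; have := l'.isLt
      constructor <;> push_cast <;> omega
    have e3 : (∑ l : Fin T, ∑ l' : Fin K,
        (if (N : ℤ) ∣ (((K + l.1 : ℕ) : ℤ) - ((l'.1 : ℤ))) then (N : F) else 0)
          • (R l * rowBlock K A l')) = 0 := by
      refine Finset.sum_eq_zero fun l _ => Finset.sum_eq_zero fun l' _ => ?_
      rw [if_neg, zero_smul]
      refine not_dvd_small _ (by have := l.isLt; have := l'.isLt; push_cast; omega) ?_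
      rw [abs_lt]
      have := l.isLt; have := l'.isLt
      constructor <;> push_cast <;> omega
    have e4 : (∑ l : Fin T, ∑ l' : Fin T,
        (if (N : ℤ) ∣ (((K + l.1 : ℕ) : ℤ) - ((K + T + l'.1 : ℕ) : ℤ)) then (N : F) else 0)
          • (R l * S l')) = 0 := by
      refine Finset.sum_eq_zero fun l _ => Finset.sum_eq_zero fun l' _ => ?_
      rw [if_neg, zero_smul]
      refine not_dvd_small _ (by have := l.isLt; have := l'.isLt; push_cast; omega) ?_
      rw [abs_lt]
      have := l.isLt; have := l'.isLt
      constructor <;> push_cast <;> omega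
    rw [e2, e3, e4, add_zero, add_zero, add_zero]
    have e1 : ∀ l : Fin K, (∑ l' : Fin K,
        (if (N : ℤ) ∣ (((l.1 : ℕ) : ℤ) - ((l'.1 : ℤ))) then (N : F) else 0)
          • (colBlock K M l * rowBlock K A l'))
        = (N : F) • (colBlock K M l * rowBlock K A l) := by
      intro l
      rw [Finset.sum_eq_single l]
      · rw [if_pos (by simp)]
      · intro l' _ hne
        rw [if_neg, zero_smul]
        refine not_dvd_small _ ?_ ?_
        · have : l.1 ≠ l'.1 := fun h => hne (Fin.ext h.symm)
          push_cast
          omega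
        · rw [abs_lt]
          have := l.isLt; have := l'.isLt
          constructor <;> push_cast <;> omega
      · intro h
        exact absurd (Finset.mem_univ l) h
    calc (∑ l : Fin K, ∑ l' : Fin K,
          (if (N : ℤ) ∣ (((l.1 : ℕ) : ℤ) - ((l'.1 : ℤ))) then (N : F) else 0)
            • (colBlock K M l * rowBlock K A l'))
        = ∑ l : Fin K, (N : F) • (colBlock K M l * rowBlock K A l) :=
          Finset.sum_congr rfl fun l _ => e1 l
      _ = (N : F) • (M * A) := by rw [← Finset.smul_sum, blockMul]
  intro j
  have step : ∑ i ∈ Finset.range N, V i j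
      = (∑ l : Fin K, α ^ (j * l.1) • colBlock K (∑ i ∈ Finset.range N, H i) l)
        + ∑ l : Fin T, α ^ (j * (K + l.1)) • ∑ i ∈ Finset.range N, R' i l := by
    simp only [hV, Finset.sum_add_distrib]
    congr 1
    · rw [Finset.sum_comm]
      exact Finset.sum_congr rfl fun l _ => by rw [colBlock_sum, Finset.smul_sum]
    · rw [Finset.sum_comm]
      exact Finset.sum_congr rfl fun l _ => by rw [Finset.smul_sum]
  rw [step, hsum, smul_add, Finset.smul_sum, Finset.smul_sum]
  congr 1
  · refine Finset.sum_congr rfl fun l _ => ?_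
    rw [colBlock_smul, smul_smul, smul_smul]
    congr 1
    rw [mul_comm, ← mul_assoc, mul_inv_cancel₀ hNF, one_mul]
  · exact Finset.sum_congr rfl fun l _ => smul_comm _ _ _
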